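/- For every tree Q = Q(r,m,n) of diameter four, χ'_es(Q) = χ'_s(Q). -/

import Mathlib

/-!
In a vdec of `Q(r,m,n)` a colour class contains at most one edge at the centre `w₀`, by properness,
and at most one edge avoiding `w₀`: such an edge is pendant, its leaf sees only that edge's colour,
and two leaves must see different colour sets. So colour classes have at most two edges, and a
vdec that is not equitable has an empty class and a class with two edges. Recolouring one edge of
the latter with the unused colour keeps a vdec and strictly decreases the set of unused colours,
so a vdec with `χ'ₛ(Q)` colours can be made equitable. A vdec exists at all because `Q` has
diameter greater than one: then colouring every edge differently distinguishes all vertices.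
-/

open SimpleGraph

variable {V : Type*}

/-- A vertex distinguishing proper edge `k`-coloring (vdec): a proper edge coloring
(edges sharing an endpoint get different colors) such that distinct vertices have
distinct sets of colors on their incident edges. -/
def IsVDEC (G : SimpleGraph V) (k : ℕ) (c : Sym2 V → Fin k) : Prop :=
  (∀ ⦃u v w : V⦄, G.Adj u v → G.Adj u w → v ≠ w → c s(u, v) ≠ c s(u, w)) ∧
  (∀ u v : V, u ≠ v →
    {i : Fin k | ∃ w, G.Adj u w ∧ c s(u, w) = i} ≠
    {i : Fin k | ∃ w, G.Adj v w ∧ c s(v, w) = i})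

/-- `χ'ₛ(G)`: the minimum number of colors in a vdec of `G`. -/
noncomputable def vdecNum (G : SimpleGraph V) : ℕ :=
  sInf {k : ℕ | ∃ c : Sym2 V → Fin k, IsVDEC G k c}

/-- `n_d(G)`: the number of vertices of degree `d` in `G`. -/
noncomputable def numDeg (G : SimpleGraph V) (d : ℕ) : ℕ :=
  Nat.card {v : V // Nat.card (G.neighborSet v) = d}

/-- An edge coloring is equitable if any two color classes differ in size by at most one. -/
def IsEquitable (G : SimpleGraph V) (k : ℕ) (c : Sym2 V → Fin k) : Prop :=
  ∀ i j : Fin k,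
    (Nat.card {e : Sym2 V // e ∈ G.edgeSet ∧ c e = i} : ℤ) -
      (Nat.card {e : Sym2 V // e ∈ G.edgeSet ∧ c e = j} : ℤ) ≤ 1

/-- `χ'ₑₛ(G)`: the minimum number of colors in an equitable vdec of `G`. -/
noncomputable def evdecNum (G : SimpleGraph V) : ℕ :=
  sInf {k : ℕ | ∃ c : Sym2 V → Fin k, IsVDEC G k c ∧ IsEquitable G k c}

/-- Vertex type of the tree `Q(r,m,n)`: the center `w₀`, the leaves `w₁,…,w_r`,
the pairs `sᵢ, s'ᵢ` (encoded as `(i,0)` and `(i,1)`), the vertices `t₁,…,tₙ`,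
and the leaves `t'_{i,j}` for `j < rv i`. -/
abbrev QVert (r m n : ℕ) (rv : Fin n → ℕ) : Type :=
  Unit ⊕ Fin r ⊕ (Fin m × Fin 2) ⊕ (Fin n ⊕ Σ i : Fin n, Fin (rv i))

/-- The tree `Q(r,m,n)` of diameter four: the center `w₀` is adjacent to the `r` leaves
`wᵢ`, to the `m` vertices `sᵢ` (each `sᵢ` having one further leaf neighbor `s'ᵢ`),
and to the `n` vertices `tᵢ`, where `tᵢ` has `rv i` further neighbors, all leaves. -/
def QGraph (r m n : ℕ) (rv : Fin n → ℕ) : SimpleGraph (QVert r m n rv) :=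
  SimpleGraph.fromRel (fun a b =>
    (a = Sum.inl () ∧
      ((∃ i, b = Sum.inr (Sum.inl i)) ∨
       (∃ i, b = Sum.inr (Sum.inr (Sum.inl (i, (0 : Fin 2))))) ∨
       (∃ i, b = Sum.inr (Sum.inr (Sum.inr (Sum.inl i)))))) ∨
    (∃ i : Fin m, a = Sum.inr (Sum.inr (Sum.inl (i, (0 : Fin 2)))) ∧
       b = Sum.inr (Sum.inr (Sum.inl (i, (1 : Fin 2))))) ∨
    (∃ (i : Fin n) (j : Fin (rv i)), a = Sum.inr (Sum.inr (Sum.inr (Sum.inl i))) ∧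
       b = Sum.inr (Sum.inr (Sum.inr (Sum.inr ⟨i, j⟩)))))

section Coloring

variable {G : SimpleGraph V} {k : ℕ} {c : Sym2 V → Fin k}

def IsProperEdgeColoring (G : SimpleGraph V) (c : Sym2 V → Fin k) : Prop :=
  ∀ ⦃u v w : V⦄, G.Adj u v → G.Adj u w → v ≠ w → c s(u, v) ≠ c s(u, w)

def incidentColors (G : SimpleGraph V) (c : Sym2 V → Fin k) (u : V) : Set (Fin k) :=
  {i | ∃ w, G.Adj u w ∧ c s(u, w) = i}

def unusedColors (G : SimpleGraph V) (c : Sym2 V → Fin k) : Set (Fin k) :=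
  {i | ∀ e ∈ G.edgeSet, c e ≠ i}

def colorClass (G : SimpleGraph V) (c : Sym2 V → Fin k) (i : Fin k) : Set (Sym2 V) :=
  {e | e ∈ G.edgeSet ∧ c e = i}

theorem isVDEC_iff : IsVDEC G k c ↔ IsProperEdgeColoring G c ∧
    ∀ u v, u ≠ v → incidentColors G c u ≠ incidentColors G c v :=
  Iff.rfl

theorem isEquitable_iff : IsEquitable G k c ↔
    ∀ i j, ((colorClass G c i).ncard : ℤ) - (colorClass G c j).ncard ≤ 1 :=
  Iff.rfl

theorem not_mem_incidentColors_of_mem_unusedColors {j : Fin k} (hj : j ∈ unusedColors G c)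
    (u : V) : j ∉ incidentColors G c u := by
  rintro ⟨w, hw, rfl⟩
  exact hj _ hw rfl

theorem mem_incidentColors_of_mem_edge {e : Sym2 V} (he : e ∈ G.edgeSet) {u : V} (hu : u ∈ e) :
    c e ∈ incidentColors G c u := by
  obtain ⟨w, rfl⟩ := Sym2.mem_iff_exists.mp hu
  exact ⟨w, he, rfl⟩

theorem incidentColors_eq_singleton_of_forall_adj_eq {p l : V} (hpl : G.Adj p l)
    (hl : ∀ z, G.Adj l z → z = p) : incidentColors G c l = {c s(p, l)} := by
  ext i
  constructor
  · rintro ⟨w, hw, rfl⟩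
    rw [hl w hw, Sym2.eq_swap, Set.mem_singleton_iff]
  · rintro rfl
    exact ⟨p, hpl.symm, congrArg c Sym2.eq_swap⟩

theorem eq_of_incidentColors_eq_of_injective (hc : Function.Injective c) {u v w : V} (huv : u ≠ v)
    (h : incidentColors G c u = incidentColors G c v) (huw : G.Adj u w) : w = v := by
  obtain ⟨w', -, hw'⟩ : c s(u, w) ∈ incidentColors G c v := h ▸ ⟨w, huw, rfl⟩
  rcases Sym2.eq_iff.mp (hc hw') with ⟨hvu, -⟩ | ⟨hvw, -⟩
  · exact absurd hvu.symm huv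
  · exact hvw.symm

section Update

variable [DecidableEq V] {j : Fin k}

theorem incidentColors_update_of_not_mem {e : Sym2 V} {x : V} (hx : x ∉ e) :
    incidentColors G (Function.update c e j) x = incidentColors G c x := by
  have hne : ∀ w, s(x, w) ≠ e := fun w h => hx (h ▸ Sym2.mem_mk_left x w)
  simp only [incidentColors, Function.update_of_ne (hne _)]

theorem IsProperEdgeColoring.incidentColors_update (hc : IsProperEdgeColoring G c) {x y : V}
    (hxy : G.Adj x y) :
    incidentColors G (Function.update c s(x, y) j) x =
      insert j (incidentColors G c x \ {c s(x, y)}) := by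
  ext i
  simp only [incidentColors, Set.mem_ofPred_eq, Set.mem_insert_iff, Set.mem_sdiff,
    Set.mem_singleton_iff]
  constructor
  · rintro ⟨w, hw, rfl⟩
    by_cases hwy : w = y
    · subst hwy
      exact Or.inl (Function.update_self ..)
    · have hne : s(x, w) ≠ s(x, y) := Sym2.congr_right.not.mpr hwy
      rw [Function.update_of_ne hne]
      exact Or.inr ⟨⟨w, hw, rfl⟩, hc hw hxy hwy⟩
  · rintro (rfl | ⟨⟨w, hw, rfl⟩, hwy⟩)
    · exact ⟨y, hxy, Function.update_self ..⟩
    · exact ⟨w, hw, Function.update_of_ne (fun h => hwy (congrArg c h)) _ _⟩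

theorem IsProperEdgeColoring.update (hc : IsProperEdgeColoring G c) {e : Sym2 V}
    (hj : j ∈ unusedColors G c) : IsProperEdgeColoring G (Function.update c e j) := by
  intro u v w hv hw hvw
  have hne : s(u, v) ≠ s(u, w) := Sym2.congr_right.not.mpr hvw
  by_cases hev : s(u, v) = e
  · rw [← hev, Function.update_self, Function.update_of_ne hne.symm]
    exact fun h => hj _ hw h.symm
  · rw [Function.update_of_ne hev]
    by_cases hew : s(u, w) = e
    · rw [← hew, Function.update_self]
      exact hj _ hv
    · rw [Function.update_of_ne hew]
      exact hc hv hw hvw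

theorem IsVDEC.update (hc : IsVDEC G k c) {e : Sym2 V} (he : e ∈ G.edgeSet)
    (hj : j ∈ unusedColors G c) : IsVDEC G k (Function.update c e j) := by
  rw [isVDEC_iff] at hc ⊢
  obtain ⟨hp, hd⟩ := hc
  refine ⟨hp.update hj, fun u v huv h => ?_⟩
  have hnot := not_mem_incidentColors_of_mem_unusedColors hj
  induction e using Sym2.ind with
  | _ x y =>
  have hxy : G.Adj x y := he
  have hin : ∀ z ∈ s(x, y), incidentColors G (Function.update c s(x, y) j) z =
      insert j (incidentColors G c z \ {c s(x, y)}) := by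
    intro z hz
    rcases Sym2.mem_iff.mp hz with rfl | rfl
    · exact hp.incidentColors_update hxy
    · rw [Sym2.eq_swap]
      exact hp.incidentColors_update hxy.symm
  by_cases hu : u ∈ s(x, y) <;> by_cases hv : v ∈ s(x, y)
  · rw [hin u hu, hin v hv] at h
    have hj' : ∀ z, j ∉ incidentColors G c z \ {c s(x, y)} := fun z h' => hnot z h'.1
    have hdel : incidentColors G c u \ {c s(x, y)} = incidentColors G c v \ {c s(x, y)} := by
      rw [← Set.insert_sdiff_self_of_notMem (hj' u), h, Set.insert_sdiff_self_of_notMem (hj' v)]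
    apply hd u v huv
    rw [← Set.insert_sdiff_self_of_mem (mem_incidentColors_of_mem_edge he hu), hdel,
      Set.insert_sdiff_self_of_mem (mem_incidentColors_of_mem_edge he hv)]
  · rw [hin u hu, incidentColors_update_of_not_mem hv] at h
    exact hnot v (h ▸ Set.mem_insert j _)
  · rw [hin v hv, incidentColors_update_of_not_mem hu] at h
    exact hnot u (h ▸ Set.mem_insert j _)
  · rw [incidentColors_update_of_not_mem hu, incidentColors_update_of_not_mem hv] at h
    exact hd u v huv h

theorem unusedColors_update_ssubset {e₁ e₂ : Sym2 V} (he₁ : e₁ ∈ G.edgeSet)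
    (he₂ : e₂ ∈ G.edgeSet) (hne : e₁ ≠ e₂) (hce : c e₁ = c e₂) (hj : j ∈ unusedColors G c) :
    unusedColors G (Function.update c e₁ j) ⊂ unusedColors G c := by
  refine Set.ssubset_iff_subset_ne.mpr ⟨fun i hi e he hci => ?_, fun h => ?_⟩
  · by_cases hee : e = e₁
    · subst hee
      exact hi e₂ he₂ (by rw [Function.update_of_ne hne.symm, ← hce, hci])
    · exact hi e he (by rwa [Function.update_of_ne hee])
  · rw [← h] at hj
    exact hj e₁ he₁ (Function.update_self ..)

end Update

theorem exists_repeated_and_unused_of_not_isEquitable [Finite V]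
    (hle : ∀ i, (colorClass G c i).ncard ≤ 2) (h : ¬ IsEquitable G k c) :
    ∃ e₁ ∈ G.edgeSet, ∃ e₂ ∈ G.edgeSet, e₁ ≠ e₂ ∧ c e₁ = c e₂ ∧ (unusedColors G c).Nonempty := by
  simp only [isEquitable_iff, not_forall, not_le] at h
  obtain ⟨i, i', hii'⟩ := h
  have hi := hle i
  obtain ⟨e₁, e₂, ⟨he₁, hc₁⟩, ⟨he₂, hc₂⟩, hne⟩ :=
    (Set.one_lt_ncard_iff).mp (by omega : 1 < (colorClass G c i).ncard)
  have hi' : colorClass G c i' = ∅ := (Set.ncard_eq_zero).mp (by omega)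
  exact ⟨e₁, he₁, e₂, he₂, hne, hc₁.trans hc₂.symm, i', fun e he hci' => hi'.subset ⟨he, hci'⟩⟩

theorem IsProperEdgeColoring.eq_of_mem_of_mem (hc : IsProperEdgeColoring G c) {e₁ e₂ : Sym2 V}
    (he₁ : e₁ ∈ G.edgeSet) (he₂ : e₂ ∈ G.edgeSet) {w : V} (hw₁ : w ∈ e₁) (hw₂ : w ∈ e₂)
    (hce : c e₁ = c e₂) : e₁ = e₂ := by
  obtain ⟨b₁, rfl⟩ := Sym2.mem_iff_exists.mp hw₁
  obtain ⟨b₂, rfl⟩ := Sym2.mem_iff_exists.mp hw₂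
  by_contra hne
  exact hc he₁ he₂ (by rintro rfl; exact hne rfl) hce

theorem IsVDEC.eq_of_forall_adj_eq (hc : IsVDEC G k c) {p₁ l₁ p₂ l₂ : V} (h₁ : G.Adj p₁ l₁)
    (hl₁ : ∀ z, G.Adj l₁ z → z = p₁) (h₂ : G.Adj p₂ l₂) (hl₂ : ∀ z, G.Adj l₂ z → z = p₂)
    (hce : c s(p₁, l₁) = c s(p₂, l₂)) : s(p₁, l₁) = s(p₂, l₂) := by
  have hl : l₁ = l₂ := by
    by_contra hne
    apply (isVDEC_iff.mp hc).2 l₁ l₂ hne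
    rw [incidentColors_eq_singleton_of_forall_adj_eq h₁ hl₁,
      incidentColors_eq_singleton_of_forall_adj_eq h₂ hl₂, hce]
  subst hl
  rw [hl₁ p₂ h₂.symm]

theorem IsVDEC.ncard_colorClass_le_two (hc : IsVDEC G k c) (w : V)
    (hleaf : ∀ e ∈ G.edgeSet, w ∉ e → ∃ p l, e = s(p, l) ∧ ∀ z, G.Adj l z → z = p)
    (i : Fin k) : (colorClass G c i).ncard ≤ 2 := by
  classical
  have hinj : Set.InjOn (fun e => decide (w ∈ e)) (colorClass G c i) := by
    rintro e₁ ⟨he₁, hc₁⟩ e₂ ⟨he₂, hc₂⟩ hw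
    simp only [decide_eq_decide] at hw
    by_cases hw₁ : w ∈ e₁
    · exact (isVDEC_iff.mp hc).1.eq_of_mem_of_mem he₁ he₂ hw₁ (hw.mp hw₁) (hc₁.trans hc₂.symm)
    · obtain ⟨p₁, l₁, rfl, hl₁⟩ := hleaf e₁ he₁ hw₁
      obtain ⟨p₂, l₂, rfl, hl₂⟩ := hleaf e₂ he₂ (hw₁ ∘ hw.mpr)
      exact hc.eq_of_forall_adj_eq he₁ hl₁ he₂ hl₂ (hc₁.trans hc₂.symm)
  calc (colorClass G c i).ncard ≤ (Set.univ : Set Bool).ncard :=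
        Set.ncard_le_ncard_of_injOn _ (fun _ _ => Set.mem_univ _) hinj
    _ = 2 := by simp

theorem IsVDEC.exists_isEquitable [Finite V]
    (hle : ∀ c : Sym2 V → Fin k, IsVDEC G k c → ∀ i, (colorClass G c i).ncard ≤ 2)
    (hc : IsVDEC G k c) : ∃ c', IsVDEC G k c' ∧ IsEquitable G k c' := by
  classical
  induction hN : (unusedColors G c).ncard using Nat.strong_induction_on generalizing c with
  | _ N ih =>
  by_cases heq : IsEquitable G k c
  · exact ⟨c, hc, heq⟩
  obtain ⟨e₁, he₁, e₂, he₂, hne, hce, j, hj⟩ :=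
    exists_repeated_and_unused_of_not_isEquitable (hle c hc) heq
  exact ih _ (hN ▸ Set.ncard_lt_ncard (unusedColors_update_ssubset he₁ he₂ hne hce hj))
    (hc.update he₁ hj) rfl

theorem evdecNum_eq_vdecNum [Finite V]
    (hle : ∀ k (c : Sym2 V → Fin k), IsVDEC G k c → ∀ i, (colorClass G c i).ncard ≤ 2)
    (hex : ∃ k c, IsVDEC G k c) : evdecNum G = vdecNum G := by
  obtain ⟨c, hc⟩ := Nat.sInf_mem hex
  obtain ⟨c', hc', heq⟩ := hc.exists_isEquitable (hle _)
  obtain ⟨c'', hc'', -⟩ :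
      evdecNum G ∈ {k | ∃ c : Sym2 V → Fin k, IsVDEC G k c ∧ IsEquitable G k c} :=
    Nat.sInf_mem ⟨_, c', hc', heq⟩
  exact le_antisymm (Nat.sInf_le ⟨c', hc', heq⟩) (Nat.sInf_le ⟨c'', hc''⟩)

end Coloring

theorem SimpleGraph.Connected.eq_top_of_forall_adj_eq {G : SimpleGraph V} (hG : G.Connected)
    {u v : V} (huv : u ≠ v) (hu : ∀ w, G.Adj u w → w = v) (hv : ∀ w, G.Adj v w → w = u) :
    G = ⊤ := by
  have hadj : G.Adj u v := by
    obtain ⟨d, -, hd, -⟩ := (hG u v).some.exists_boundary_dart {u} rfl huv.symm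
    rw [Set.mem_singleton_iff] at hd
    have hud : G.Adj u d.snd := hd ▸ d.adj
    rwa [hu _ hud] at hud
  have hmem : ∀ x, x = u ∨ x = v := by
    intro x
    by_contra hx
    obtain ⟨d, -, hd, hd'⟩ := (hG u x).some.exists_boundary_dart {u, v} (Or.inl rfl) hx
    rcases hd with hd | hd
    · exact hd' (Or.inr (hu _ (hd ▸ d.adj)))
    · exact hd' (Or.inl (hv _ (hd ▸ d.adj)))
  ext x y
  rw [top_adj]
  rcases hmem x with rfl | rfl <;> rcases hmem y with rfl | rfl <;>
    simp [hadj, hadj.symm, huv, huv.symm]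

theorem exists_isVDEC_of_one_lt_diam [Finite V] {G : SimpleGraph V} (h : 1 < G.diam) :
    ∃ (k : ℕ) (c : Sym2 V → Fin k), IsVDEC G k c := by
  let c := Finite.equivFin (Sym2 V)
  refine ⟨_, c, fun u v w _ _ hvw hcol => hvw (Sym2.congr_right.mp (c.injective hcol)),
    fun u v huv h => ?_⟩
  have : Nontrivial V := G.nontrivial_of_diam_ne_zero (by omega)
  have hG : G = ⊤ := (G.connected_iff_diam_ne_zero.mpr (by omega)).eq_top_of_forall_adj_eq huv
    (fun _ => eq_of_incidentColors_eq_of_injective c.injective huv h)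
    (fun _ => eq_of_incidentColors_eq_of_injective c.injective huv.symm h.symm)
  rw [← diam_eq_one] at hG
  omega

theorem QGraph.exists_leaf_of_not_mem {r m n : ℕ} {rv : Fin n → ℕ} {e : Sym2 (QVert r m n rv)}
    (he : e ∈ (QGraph r m n rv).edgeSet) (hw : Sum.inl () ∉ e) :
    ∃ p l, e = s(p, l) ∧ ∀ z, (QGraph r m n rv).Adj l z → z = p := by
  induction e using Sym2.ind with
  | _ a b =>
  simp only [mem_edgeSet, QGraph, fromRel_adj] at he
  simp only [Sym2.mem_iff, not_or] at hw
  obtain ⟨-, h | h⟩ := he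
  · rcases h with ⟨rfl, -⟩ | ⟨i, rfl, rfl⟩ | ⟨i, j, rfl, rfl⟩
    · exact absurd rfl hw.1
    all_goals exact ⟨_, _, rfl, fun z hz => by simp_all [QGraph]⟩
  · rcases h with ⟨rfl, -⟩ | ⟨i, rfl, rfl⟩ | ⟨i, j, rfl, rfl⟩
    · exact absurd rfl hw.2
    all_goals exact ⟨_, _, Sym2.eq_swap, fun z hz => by simp_all [QGraph]⟩

theorem evdecNum_QGraph_general (r m n : ℕ) (rv : Fin n → ℕ)
    (hdiam : (QGraph r m n rv).diam = 4) :
    evdecNum (QGraph r m n rv) = vdecNum (QGraph r m n rv) :=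
  evdecNum_eq_vdecNum
    (fun _ _ hc => hc.ncard_colorClass_le_two _ fun _ => QGraph.exists_leaf_of_not_mem)
    (exists_isVDEC_of_one_lt_diam (by omega))

/-- For every tree `Q = Q(r,m,n)` of diameter four,
`χ'ₑₛ(Q) = χ'ₛ(Q)`. -/
theorem evdecNum_QGraph (r m n : ℕ) (rv : Fin n → ℕ) (hrv : ∀ i, 2 ≤ rv i)
    (hdiam : (QGraph r m n rv).diam = 4) :
    evdecNum (QGraph r m n rv) = vdecNum (QGraph r m n rv) :=
  evdecNum_QGraph_general r m n rv hdiam
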